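/- Let S ∈ ℝ^{M×C} have full row rank, x ∈ ℝ^M, z ∈ ℝ^C. Define α = xᵀ(SSᵀ)⁻¹Sz, β = zᵀ(I − Sᵀ(SSᵀ)⁻¹S)z, γ = xᵀ(SSᵀ)⁻¹x, and assume α > 0, β > 0, γ > 0. Then the vector y* = Sᵀ(SSᵀ)⁻¹x + (γ/α)(I − Sᵀ(SSᵀ)⁻¹S)z satisfies S y* = x and maximizes the cosine similarity ⟨y, z⟩/(‖y‖‖z‖) over all y ∈ ℝ^C with S y = x. -/

import Mathlib

open Matrix

lemma dp_mv {m n : ℕ} (A : Matrix (Fin m) (Fin n) ℝ) (u : Fin n → ℝ) (v : Fin m → ℝ) :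
    A.mulVec u ⬝ᵥ v = u ⬝ᵥ Aᵀ.mulVec v := by
  rw [dotProduct_comm, Matrix.dotProduct_mulVec, ← Matrix.mulVec_transpose,
    dotProduct_comm]

/-- Cauchy–Schwarz for the dot product. -/
lemma cs_dp {n : ℕ} (u v : Fin n → ℝ) : (u ⬝ᵥ v)^2 ≤ (u ⬝ᵥ u) * (v ⬝ᵥ v) := by
  have := Finset.sum_mul_sq_le_sq_mul_sq Finset.univ u v
  simpa [dotProduct, sq, Finset.mul_sum, mul_comm] using this

lemma dp_self_nonneg {n : ℕ} (u : Fin n → ℝ) : 0 ≤ u ⬝ᵥ u :=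
  Finset.sum_nonneg fun i _ => mul_self_nonneg _

/-- The scalar core of the GMP optimality argument. -/
lemma gmp_scalar {α β γ T s : ℝ} (hα : 0 < α) (hβ : 0 < β) (hγ : 0 < γ)
    (hT : 0 ≤ T) (hs : s^2 ≤ T * β) :
    (α + s) / Real.sqrt (γ + T) ≤ (α + (γ/α) * β) / Real.sqrt (γ + (γ/α)^2 * β) := by
  set c := γ / α with hc
  have hcpos : 0 < c := div_pos hγ hα
  have hac : α * c = γ := by rw [hc]; field_simp [hα.ne']
  have hDpos : 0 < γ + c^2 * β := by positivity
  have hNpos : 0 < α + c * β := by positivity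
  have hTpos : 0 < γ + T := by linarith
  rcases le_or_gt (α + s) 0 with h | h
  · exact le_trans (div_nonpos_of_nonpos_of_nonneg h (Real.sqrt_nonneg _))
      (le_of_lt (div_pos hNpos (Real.sqrt_pos.mpr hDpos)))
  · rw [div_le_div_iff₀ (Real.sqrt_pos.mpr hTpos) (Real.sqrt_pos.mpr hDpos)]
    have hbt : 0 ≤ T * β - s^2 := by linarith
    have key : ((α + s) * Real.sqrt (γ + c^2*β))^2 ≤ ((α + c*β) * Real.sqrt (γ + T))^2 := by
      rw [mul_pow, mul_pow, Real.sq_sqrt hDpos.le, Real.sq_sqrt hTpos.le, ← hac]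
      nlinarith [mul_nonneg (mul_nonneg hNpos.le hα.le) hbt,
        mul_nonneg (mul_nonneg hNpos.le hα.le) (sq_nonneg (s - c*β)),
        mul_nonneg (mul_nonneg hNpos.le (mul_pos hcpos hβ).le) hbt, hβ, sq_nonneg s,
        mul_pos hα hcpos]
    have h1 : 0 ≤ (α + s) * Real.sqrt (γ + c^2*β) := by positivity
    have h2 : 0 ≤ (α + c*β) * Real.sqrt (γ + T) := by positivity
    nlinarith [key]

/-- Main GMP optimality theorem: `y* = Sᵀ(SSᵀ)⁻¹x + (γ/α)(I − Sᵀ(SSᵀ)⁻¹S)z` is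
feasible and maximizes the cosine similarity with `z` over `{y : Sy = x}`. -/
theorem gmp_optimality
    (M C : ℕ) (S : Matrix (Fin M) (Fin C) ℝ) (hS : S.rank = M)
    (x : Fin M → ℝ) (z : Fin C → ℝ)
    (α β γ : ℝ)
    (hα_def : α = x ⬝ᵥ ((S * Sᵀ)⁻¹ * S).mulVec z)
    (hβ_def : β = z ⬝ᵥ ((1 : Matrix (Fin C) (Fin C) ℝ) - Sᵀ * (S * Sᵀ)⁻¹ * S).mulVec z)
    (hγ_def : γ = x ⬝ᵥ (S * Sᵀ)⁻¹.mulVec x)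
    (hα : 0 < α) (hβ : 0 < β) (hγ : 0 < γ) :
    S.mulVec ((Sᵀ * (S * Sᵀ)⁻¹).mulVec x
        + (γ / α) • ((1 : Matrix (Fin C) (Fin C) ℝ) - Sᵀ * (S * Sᵀ)⁻¹ * S).mulVec z) = x ∧
    (∀ y : Fin C → ℝ, S.mulVec y = x → y ≠ 0 →
      y ⬝ᵥ z / (Real.sqrt (y ⬝ᵥ y) * Real.sqrt (z ⬝ᵥ z))
        ≤ (((Sᵀ * (S * Sᵀ)⁻¹).mulVec x
              + (γ / α) • ((1 : Matrix (Fin C) (Fin C) ℝ) - Sᵀ * (S * Sᵀ)⁻¹ * S).mulVec z) ⬝ᵥ z)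
            / (Real.sqrt (((Sᵀ * (S * Sᵀ)⁻¹).mulVec x
                  + (γ / α) • ((1 : Matrix (Fin C) (Fin C) ℝ) - Sᵀ * (S * Sᵀ)⁻¹ * S).mulVec z)
                ⬝ᵥ ((Sᵀ * (S * Sᵀ)⁻¹).mulVec x
                  + (γ / α) • ((1 : Matrix (Fin C) (Fin C) ℝ) - Sᵀ * (S * Sᵀ)⁻¹ * S).mulVec z))
              * Real.sqrt (z ⬝ᵥ z))) := by
  set A := S * Sᵀ with hA
  have hdet : IsUnit A.det := by
    by_contra h
    rw [Matrix.nonsing_inv_apply_not_isUnit _ h] at hγ_def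
    simp [hγ_def] at hγ
  have hA1 : A * A⁻¹ = 1 := Matrix.mul_nonsing_inv _ hdet
  have hA2 : A⁻¹ * A = 1 := Matrix.nonsing_inv_mul _ hdet
  have hAsymm : Aᵀ = A := by rw [hA, Matrix.transpose_mul, Matrix.transpose_transpose]
  have hAinvT : A⁻¹ᵀ = A⁻¹ := by rw [Matrix.transpose_nonsing_inv, hAsymm]
  set y₀ : Fin C → ℝ := (Sᵀ * A⁻¹).mulVec x with hy₀
  set w₀ : Fin C → ℝ := ((1 : Matrix (Fin C) (Fin C) ℝ) - Sᵀ * A⁻¹ * S).mulVec z with hw₀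
  have hSP : S * ((1 : Matrix (Fin C) (Fin C) ℝ) - Sᵀ * A⁻¹ * S) = 0 := by
    rw [Matrix.mul_sub, Matrix.mul_one]
    rw [show S * (Sᵀ * A⁻¹ * S) = (S * Sᵀ) * A⁻¹ * S by simp only [Matrix.mul_assoc]]
    rw [← hA, hA1, Matrix.one_mul, sub_self]
  have F1 : S.mulVec y₀ = x := by
    rw [hy₀, Matrix.mulVec_mulVec,
      show S * (Sᵀ * A⁻¹) = A * A⁻¹ by rw [hA]; simp only [Matrix.mul_assoc],
      hA1, Matrix.one_mulVec]
  have F2 : S.mulVec w₀ = 0 := by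
    rw [hw₀, Matrix.mulVec_mulVec, hSP, Matrix.zero_mulVec]
  have F3 : y₀ ⬝ᵥ y₀ = γ := by
    rw [hy₀, dp_mv, Matrix.mulVec_mulVec, Matrix.transpose_mul, hAinvT,
      Matrix.transpose_transpose,
      show A⁻¹ * S * (Sᵀ * A⁻¹) = A⁻¹ * (S * Sᵀ) * A⁻¹ by simp only [Matrix.mul_assoc], ← hA,
      Matrix.mul_assoc, hA1, Matrix.mul_one, hγ_def]
  have F4 : y₀ ⬝ᵥ z = α := by
    rw [hy₀, dp_mv, Matrix.transpose_mul, hAinvT, Matrix.transpose_transpose, hα_def]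
  have Psymm : ((1 : Matrix (Fin C) (Fin C) ℝ) - Sᵀ * A⁻¹ * S)ᵀ
      = (1 : Matrix (Fin C) (Fin C) ℝ) - Sᵀ * A⁻¹ * S := by
    rw [Matrix.transpose_sub, Matrix.transpose_one, Matrix.transpose_mul, Matrix.transpose_mul,
      hAinvT, Matrix.transpose_transpose, Matrix.mul_assoc]
  have F5 : w₀ ⬝ᵥ z = β := by
    rw [hw₀, dp_mv, Psymm, ← hβ_def, hβ_def, dotProduct_comm, dp_mv, Psymm]
  have Pidem : ((1 : Matrix (Fin C) (Fin C) ℝ) - Sᵀ * A⁻¹ * S)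
      * ((1 : Matrix (Fin C) (Fin C) ℝ) - Sᵀ * A⁻¹ * S)
      = (1 : Matrix (Fin C) (Fin C) ℝ) - Sᵀ * A⁻¹ * S := by
    have : Sᵀ * A⁻¹ * S * (Sᵀ * A⁻¹ * S) = Sᵀ * A⁻¹ * S := by
      rw [show Sᵀ * A⁻¹ * S * (Sᵀ * A⁻¹ * S) = Sᵀ * A⁻¹ * (S * Sᵀ) * (A⁻¹ * S) by
          simp only [Matrix.mul_assoc],
        ← hA, Matrix.mul_assoc (Sᵀ) _ _, hA2, Matrix.mul_one, Matrix.mul_assoc]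
    rw [Matrix.mul_sub, Matrix.mul_one, Matrix.sub_mul, Matrix.one_mul, this]
    abel
  have F6 : w₀ ⬝ᵥ w₀ = β := by
    rw [hw₀, dp_mv, Psymm, Matrix.mulVec_mulVec, Pidem, hβ_def]
  have F7 : y₀ ⬝ᵥ w₀ = 0 := by
    rw [hy₀, dp_mv, Matrix.transpose_mul, hAinvT, Matrix.transpose_transpose, hw₀,
      Matrix.mulVec_mulVec, Matrix.mul_assoc, hSP, Matrix.mul_zero, Matrix.zero_mulVec,
      dotProduct_zero]
  -- feasibility
  have feas : S.mulVec (y₀ + (γ / α) • w₀) = x := by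
    rw [Matrix.mulVec_add, F1, Matrix.mulVec_smul, F2, smul_zero, add_zero]
  refine ⟨feas, ?_⟩
  intro y hy _
  set w : Fin C → ℝ := y - y₀ with hw
  have hyw : y = y₀ + w := by rw [hw]; ring
  have hSw : S.mulVec w = 0 := by
    rw [hw, Matrix.mulVec_sub, hy, F1, sub_self]
  have y₀w : y₀ ⬝ᵥ w = 0 := by
    rw [hy₀, dp_mv, Matrix.transpose_mul, hAinvT, Matrix.transpose_transpose,
      ← Matrix.mulVec_mulVec, hSw, Matrix.mulVec_zero, dotProduct_zero]
  set s := w ⬝ᵥ w₀ with hs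
  set T := w ⬝ᵥ w with hT
  have hTnn : 0 ≤ T := dp_self_nonneg w
  have hcs : s^2 ≤ T * β := by
    have := cs_dp w w₀
    rwa [F6, ← hs, ← hT] at this
  have wPz : w ⬝ᵥ (Sᵀ * A⁻¹ * S).mulVec z = 0 := by
    rw [dotProduct_comm, dp_mv,
      show (Sᵀ * A⁻¹ * S)ᵀ = Sᵀ * (A⁻¹ * S) by
        rw [Matrix.transpose_mul, Matrix.transpose_mul, hAinvT, Matrix.transpose_transpose],
      ← Matrix.mulVec_mulVec, ← Matrix.mulVec_mulVec, hSw, Matrix.mulVec_zero,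
      Matrix.mulVec_zero, dotProduct_zero]
  have wz : w ⬝ᵥ z = s := by
    rw [hs, hw₀, Matrix.sub_mulVec, dotProduct_sub, Matrix.one_mulVec, wPz, sub_zero]
  have hyz : y ⬝ᵥ z = α + s := by
    rw [hyw, add_dotProduct, F4, wz]
  have hyy : y ⬝ᵥ y = γ + T := by
    rw [hyw, add_dotProduct, dotProduct_add, dotProduct_add, F3, y₀w,
      dotProduct_comm w y₀, y₀w, hT]
    ring
  have hstarz : (y₀ + (γ/α) • w₀) ⬝ᵥ z = α + (γ/α) * β := by
    rw [add_dotProduct, F4, smul_dotProduct, F5, smul_eq_mul]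
  have hstar2 : (y₀ + (γ/α) • w₀) ⬝ᵥ (y₀ + (γ/α) • w₀) = γ + (γ/α)^2 * β := by
    rw [add_dotProduct, dotProduct_add, dotProduct_add, F3,
      smul_dotProduct, smul_dotProduct, dotProduct_smul,
      dotProduct_smul, F6, F7, dotProduct_comm w₀ y₀, F7]
    simp [smul_eq_mul]
    ring
  rw [hyz, hyy, hstarz, hstar2]
  have hz : 0 < Real.sqrt (z ⬝ᵥ z) := by
    apply Real.sqrt_pos.mpr
    rcases eq_or_lt_of_le (dp_self_nonneg z) with h | h
    · exfalso
      have hz0 : z = 0 := dotProduct_self_eq_zero.mp h.symm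
      rw [hz0] at hβ_def
      simp at hβ_def
      linarith
    · exact h
  rw [← div_div, ← div_div]
  exact div_le_div_of_nonneg_right (gmp_scalar hα hβ hγ hTnn hcs) hz.le
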